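/- arXiv:1802.01740 — 3 statements merged into one kernel-verified Lean document; each statement's English description precedes it below -/
import Mathlib

section
/- Let d ≥ 1 and set N_d = Σ_{ℓ=1}^{d} C(d,ℓ) · ω_ℓ / ℓ^{(d-ℓ)/2}, where ω_ℓ is the volume of the ℓ-dimensional unit ball. Then for every r > 0, Σ_{k ∈ ℕ₀^d, 0 < |k| < r} 2^{ν(k)} ≤ N_d · r^d, where the sum runs over nonzero multi-indices k = (k_1,…,k_d) with nonnegative integer entries and Euclidean norm |k| < r, and ν(k) denotes the number of nonzero components of k. -/
/-!
Group the lattice points by their support `s`, say `#s = ℓ`. Restricted to `s`, the points with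
support `s` lie in `ℕ^ℓ` with all coordinates `≥ 1`; for each of them and each of the `2^ℓ` choices
of signs take the open unit cube of `ℝ^ℓ` whose vertex farthest from the origin is the signed point.
These cubes are pairwise disjoint and lie in the ball of radius `r`, so there are at most
`ω_ℓ r^ℓ / 2^ℓ` such points. A point with `ℓ` nonzero coordinates has `ℓ ≤ |k|² < r²`, hence
`r^ℓ ≤ r^d / ℓ^{(d-ℓ)/2}`, and summing over the `C(d,ℓ)` supports of each size gives `N_d r^d`.
-/

open MeasureTheory

/-- The volume of the unit ball in `ℝ^n`. -/
noncomputable def unitBallVolume (n : ℕ) : ℝ :=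
  (volume (Metric.ball (0 : EuclideanSpace ℝ (Fin n)) 1)).toReal

/-- The constant `N_d = ∑_{ℓ=1}^d C(d,ℓ) ω_ℓ / ℓ^{(d-ℓ)/2}`. -/
noncomputable def latticeConstant (d : ℕ) : ℝ :=
  ∑ ℓ ∈ Finset.Icc 1 d,
    (d.choose ℓ : ℝ) * unitBallVolume ℓ / (ℓ : ℝ) ^ (((d : ℝ) - ℓ) / 2)

open Metric Finset Function

section

variable {ι : Type*}

def unitCube (n : ι → ℤ) : Set (EuclideanSpace ℝ ι) :=
  WithLp.ofLp ⁻¹' Set.univ.pi fun i => Set.Ioo (n i : ℝ) (n i + 1)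

lemma measurableSet_unitCube [Fintype ι] (n : ι → ℤ) : MeasurableSet (unitCube n) :=
  (PiLp.volume_preserving_ofLp ι).measurable (.univ_pi fun _ => measurableSet_Ioo)

lemma volume_unitCube [Fintype ι] (n : ι → ℤ) : volume (unitCube n) = 1 := by
  rw [unitCube, (PiLp.volume_preserving_ofLp ι).measure_preimage
    (MeasurableSet.univ_pi fun _ => measurableSet_Ioo).nullMeasurableSet, Real.volume_pi_Ioo]
  simp

lemma pairwise_disjoint_unitCube : Pairwise (Disjoint on (unitCube : (ι → ℤ) → _)) := by
  intro n m hnm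
  obtain ⟨i, hi⟩ := Function.ne_iff.1 hnm
  refine Set.disjoint_left.2 fun x hxn hxm => ?_
  exact Set.disjoint_left.1 (Set.pairwise_disjoint_Ioo_intCast ℝ hi) (hxn i trivial) (hxm i trivial)

lemma card_le_volume_of_unitCube_subset [Fintype ι] (N : Finset (ι → ℤ))
    {S : Set (EuclideanSpace ℝ ι)} (hN : ∀ n ∈ N, unitCube n ⊆ S) : (#N : ENNReal) ≤ volume S := by
  calc (#N : ENNReal) = volume (⋃ n ∈ N, unitCube n) := by
        rw [measure_biUnion_finset (pairwise_disjoint_unitCube.set_pairwise _)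
          (fun n _ => measurableSet_unitCube n)]
        simp [volume_unitCube]
    _ ≤ volume S := measure_mono (Set.iUnion₂_subset hN)

/-- The unit interval `(m, m + 1)` with `m = unitIntervalIndex k b` is `(k - 1, k)` if `b` and
`(-k, -k + 1)` otherwise. -/
def unitIntervalIndex (k : ℕ) (b : Bool) : ℤ := if b then k - 1 else -k

lemma abs_le_of_mem_Ioo_unitIntervalIndex {k : ℕ} (hk : k ≠ 0) (b : Bool) {x : ℝ}
    (hx : x ∈ Set.Ioo (unitIntervalIndex k b : ℝ) (unitIntervalIndex k b + 1)) : |x| ≤ k := by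
  have hk1 : (1 : ℝ) ≤ k := by exact_mod_cast Nat.one_le_iff_ne_zero.2 hk
  cases b <;> simp only [unitIntervalIndex, Bool.false_eq_true, if_false, if_true,
    Int.cast_neg, Int.cast_natCast, Int.cast_sub, Int.cast_one, Set.mem_Ioo] at hx <;>
    exact abs_le.2 ⟨by linarith, by linarith⟩

lemma unitIntervalIndex_inj {k k' : ℕ} (hk : k ≠ 0) (hk' : k' ≠ 0) {b b' : Bool}
    (h : unitIntervalIndex k b = unitIntervalIndex k' b') : k = k' ∧ b = b' := by
  cases b <;> cases b' <;> simp [unitIntervalIndex] at h ⊢ <;> omega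

lemma two_pow_card_mul_card_le_volume_ball [Fintype ι] [DecidableEq ι] {r : ℝ}
    (T : Finset (ι → ℕ)) (hT₀ : ∀ k ∈ T, ∀ i, k i ≠ 0)
    (hTr : ∀ k ∈ T, √(∑ i, (k i : ℝ) ^ 2) < r) :
    (2 : ℝ) ^ Fintype.card ι * #T ≤ (volume (ball (0 : EuclideanSpace ℝ ι) r)).toReal := by
  let index : (ι → ℕ) × (ι → Bool) → ι → ℤ := fun p i => unitIntervalIndex (p.1 i) (p.2 i)
  have hinj : Set.InjOn index ↑(T ×ˢ (univ : Finset (ι → Bool))) := by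
    intro p hp q hq hpq
    have h i := unitIntervalIndex_inj (hT₀ _ (mem_product.1 (mem_coe.1 hp)).1 i)
      (hT₀ _ (mem_product.1 (mem_coe.1 hq)).1 i) (congrFun hpq i)
    exact Prod.ext (funext fun i => (h i).1) (funext fun i => (h i).2)
  have hsub : ∀ n ∈ (T ×ˢ univ).image index, unitCube n ⊆ ball 0 r := by
    simp only [mem_image, mem_product]
    rintro _ ⟨⟨k, b⟩, ⟨hk, -⟩, rfl⟩ x hx
    rw [mem_ball_zero_iff, EuclideanSpace.norm_eq]
    refine lt_of_le_of_lt (Real.sqrt_le_sqrt (sum_le_sum fun i _ => ?_)) (hTr k hk)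
    rw [Real.norm_eq_abs]
    exact pow_le_pow_left₀ (abs_nonneg _)
      (abs_le_of_mem_Ioo_unitIntervalIndex (hT₀ k hk i) _ (hx i trivial)) 2
  have hcard := ENNReal.toReal_mono measure_ball_lt_top.ne
    (card_le_volume_of_unitCube_subset _ hsub)
  rwa [card_image_of_injOn hinj, card_product, card_univ, Fintype.card_fun, Fintype.card_bool,
    ENNReal.toReal_natCast, Nat.cast_mul, Nat.cast_pow, Nat.cast_two, mul_comm] at hcard

lemma two_pow_card_mul_card_le_volume_ball_of_support [Fintype ι] [DecidableEq ι]
    {r : ℝ} (s : Finset ι) (G : Finset (ι → ℕ)) (hGs : ∀ k ∈ G, ∀ i, k i ≠ 0 ↔ i ∈ s)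
    (hGr : ∀ k ∈ G, √(∑ i, (k i : ℝ) ^ 2) < r) :
    (2 : ℝ) ^ #s * #G ≤ (volume (ball (0 : EuclideanSpace ℝ s) r)).toReal := by
  have hinj : Set.InjOn (fun (k : ι → ℕ) (i : s) => k i) G := by
    intro k hk k' hk' h
    funext i
    by_cases hi : i ∈ s
    · exact congrFun h ⟨i, hi⟩
    · rw [not_ne_iff.1 (mt (hGs k hk i).1 hi), not_ne_iff.1 (mt (hGs k' hk' i).1 hi)]
  have hsum (k : ι → ℕ) (hk : k ∈ G) : ∑ i : s, (k i : ℝ) ^ 2 = ∑ i, (k i : ℝ) ^ 2 := by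
    rw [sum_coe_sort s fun i => (k i : ℝ) ^ 2]
    refine sum_subset (subset_univ s) fun i _ hi => ?_
    rw [not_ne_iff.1 (mt (hGs k hk i).1 hi), Nat.cast_zero, sq, zero_mul]
  rw [← Fintype.card_coe s, ← card_image_of_injOn hinj]
  refine two_pow_card_mul_card_le_volume_ball _ ?_ ?_ <;>
    simp only [mem_image, forall_exists_index, and_imp, forall_apply_eq_imp_iff₂]
  · exact fun k hk i => (hGs k hk i).2 i.2
  · exact fun k hk => hsum k hk ▸ hGr k hk

lemma toReal_volume_ball [Fintype ι] [Nonempty ι] {r : ℝ} (hr : 0 ≤ r) :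
    (volume (ball (0 : EuclideanSpace ℝ ι) r)).toReal =
      unitBallVolume (Fintype.card ι) * r ^ Fintype.card ι := by
  have : Nonempty (Fin (Fintype.card ι)) := Fin.pos_iff_nonempty.1 Fintype.card_pos
  rw [unitBallVolume, EuclideanSpace.volume_ball, EuclideanSpace.volume_ball, Fintype.card_fin,
    ENNReal.ofReal_one, one_pow, one_mul, ENNReal.toReal_mul, ENNReal.toReal_pow,
    ENNReal.toReal_ofReal hr, mul_comm]

lemma natCast_rpow_mul_pow_le_pow {ℓ d : ℕ} {r : ℝ} (hr : 0 ≤ r) (hℓd : ℓ ≤ d)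
    (hℓr : (ℓ : ℝ) ≤ r ^ 2) : (ℓ : ℝ) ^ (((d : ℝ) - ℓ) / 2) * r ^ ℓ ≤ r ^ d := by
  have hsqrt : √(ℓ : ℝ) ≤ r := Real.sqrt_le_iff.2 ⟨hr, hℓr⟩
  have hexp : ((d : ℝ) - ℓ) / 2 = (1 / 2 : ℝ) * ((d - ℓ : ℕ) : ℝ) := by
    rw [Nat.cast_sub hℓd]; ring
  rw [hexp, Real.rpow_mul (Nat.cast_nonneg ℓ), ← Real.sqrt_eq_rpow, Real.rpow_natCast]
  calc √(ℓ : ℝ) ^ (d - ℓ) * r ^ ℓ ≤ r ^ (d - ℓ) * r ^ ℓ := by gcongr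
    _ = r ^ d := by rw [← pow_add, Nat.sub_add_cancel hℓd]

lemma card_support_le_sum_sq [Fintype ι] {s : Finset ι} {k : ι → ℕ}
    (hks : ∀ i, k i ≠ 0 ↔ i ∈ s) : (#s : ℝ) ≤ ∑ i, (k i : ℝ) ^ 2 := by
  calc (#s : ℝ) = ∑ i ∈ s, (1 : ℝ) ^ 2 := by simp
    _ ≤ ∑ i ∈ s, (k i : ℝ) ^ 2 := sum_le_sum fun i hi => by
        gcongr; exact_mod_cast Nat.one_le_iff_ne_zero.2 ((hks i).2 hi)
    _ ≤ ∑ i, (k i : ℝ) ^ 2 := sum_le_univ_sum_of_nonneg fun i => sq_nonneg _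

lemma two_pow_card_mul_card_le_of_support [Fintype ι] [DecidableEq ι] {r : ℝ}
    (hr : 0 ≤ r) {s : Finset ι} (hs : s.Nonempty) (G : Finset (ι → ℕ))
    (hGs : ∀ k ∈ G, ∀ i, k i ≠ 0 ↔ i ∈ s) (hGr : ∀ k ∈ G, √(∑ i, (k i : ℝ) ^ 2) < r) :
    (2 : ℝ) ^ #s * #G ≤
      unitBallVolume #s * r ^ Fintype.card ι / (#s : ℝ) ^ (((Fintype.card ι : ℝ) - #s) / 2) := by
  obtain rfl | ⟨k, hk⟩ := G.eq_empty_or_nonempty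
  · simp only [card_empty, Nat.cast_zero, mul_zero]
    exact div_nonneg (mul_nonneg ENNReal.toReal_nonneg (by positivity)) (by positivity)
  have : Nonempty s := hs.coe_sort
  have hsr : (#s : ℝ) ≤ r ^ 2 :=
    (card_support_le_sum_sq (hGs k hk)).trans (Real.lt_sq_of_sqrt_lt (hGr k hk)).le
  rw [le_div_iff₀ (by positivity)]
  calc (2 : ℝ) ^ #s * #G * (#s : ℝ) ^ (((Fintype.card ι : ℝ) - #s) / 2)
      ≤ unitBallVolume #s * r ^ #s * (#s : ℝ) ^ (((Fintype.card ι : ℝ) - #s) / 2) := by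
        gcongr ?_ * _
        simpa only [toReal_volume_ball hr, Fintype.card_coe] using
          two_pow_card_mul_card_le_volume_ball_of_support s G hGs hGr
    _ = unitBallVolume #s * ((#s : ℝ) ^ (((Fintype.card ι : ℝ) - #s) / 2) * r ^ #s) := by ring
    _ ≤ unitBallVolume #s * r ^ Fintype.card ι := by
        gcongr
        · exact ENNReal.toReal_nonneg
        · exact natCast_rpow_mul_pow_le_pow hr (card_le_univ s) hsr

lemma latticeConstant_mul_pow_eq_sum_range (d : ℕ) (r : ℝ) :
    latticeConstant d * r ^ d = ∑ ℓ ∈ range (d + 1), d.choose ℓ •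
      if ℓ = 0 then 0 else unitBallVolume ℓ * r ^ d / (ℓ : ℝ) ^ (((d : ℝ) - ℓ) / 2) := by
  rw [range_eq_Ico, sum_eq_sum_Ico_succ_bot (by omega : 0 < d + 1), zero_add,
    Ico_add_one_right_eq_Icc, if_pos rfl, smul_zero, zero_add, latticeConstant, sum_mul]
  refine sum_congr rfl fun ℓ hℓ => ?_
  rw [if_neg (Nat.one_le_iff_ne_zero.1 (mem_Icc.1 hℓ).1), nsmul_eq_mul]
  ring

theorem sum_two_pow_card_support_le [Fintype ι] [DecidableEq ι] {r : ℝ} (hr : 0 ≤ r)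
    (F : Finset (ι → ℕ)) (hF : ∀ k ∈ F, k ≠ 0 ∧ √(∑ i, (k i : ℝ) ^ 2) < r) :
    ∑ k ∈ F, (2 : ℝ) ^ #{i | k i ≠ 0} ≤ latticeConstant (Fintype.card ι) * r ^ Fintype.card ι := by
  set d := Fintype.card ι
  let bound : ℕ → ℝ := fun ℓ =>
    if ℓ = 0 then 0 else unitBallVolume ℓ * r ^ d / (ℓ : ℝ) ^ (((d : ℝ) - ℓ) / 2)
  let fiber (s : Finset ι) : Finset (ι → ℕ) := {k ∈ F | ({i | k i ≠ 0} : Finset ι) = s}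
  have hfiber_support (s : Finset ι) : ∀ k ∈ fiber s, ∀ i, k i ≠ 0 ↔ i ∈ s := fun k hk i => by
    rw [← (mem_filter.1 hk).2, mem_filter, and_iff_right (mem_univ i)]
  have hfiber_le (s : Finset ι) : (2 : ℝ) ^ #s * #(fiber s) ≤ bound #s := by
    obtain rfl | hs := s.eq_empty_or_nonempty
    · have hempty : fiber ∅ = ∅ := eq_empty_of_forall_notMem fun k hk =>
        (hF k (mem_filter.1 hk).1).1
          (funext fun i => not_ne_iff.1 (mt (hfiber_support ∅ k hk i).1 (notMem_empty i)))
      simp [hempty, bound]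
    · simpa only [bound, if_neg hs.card_pos.ne'] using
        two_pow_card_mul_card_le_of_support hr hs (fiber s) (hfiber_support s)
          fun k hk => (hF k (mem_filter.1 hk).1).2
  calc ∑ k ∈ F, (2 : ℝ) ^ #{i | k i ≠ 0}
      = ∑ s : Finset ι, ∑ k ∈ fiber s, (2 : ℝ) ^ #{i | k i ≠ 0} := (sum_fiberwise F _ _).symm
    _ = ∑ s : Finset ι, (2 : ℝ) ^ #s * #(fiber s) := by
        refine sum_congr rfl fun s _ => ?_
        rw [sum_congr rfl fun k hk => by rw [(mem_filter.1 hk).2], sum_const, nsmul_eq_mul,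
          mul_comm]
    _ ≤ ∑ s : Finset ι, bound #s := sum_le_sum fun s _ => hfiber_le s
    _ = latticeConstant d * r ^ d := by
        rw [← powerset_univ, sum_powerset_apply_card, card_univ,
          latticeConstant_mul_pow_eq_sum_range]

lemma finite_setOf_sqrt_sum_sq_lt [Fintype ι] [DecidableEq ι] (r : ℝ) :
    {k : ι → ℕ | √(∑ i, (k i : ℝ) ^ 2) < r}.Finite := by
  refine (Set.finite_Iic fun _ => ⌈r⌉₊).subset fun k hk i => ?_
  have hki : (k i : ℝ) ≤ √(∑ j, (k j : ℝ) ^ 2) :=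
    Real.le_sqrt_of_sq_le (single_le_sum (fun j _ => sq_nonneg (k j : ℝ)) (mem_univ i))
  exact_mod_cast hki.trans (hk.le.trans (Nat.le_ceil r))

end

theorem weighted_lattice_count_general (d : ℕ) (r : ℝ) (hr : 0 < r) :
    (∑ᶠ k ∈ {k : Fin d → ℕ | k ≠ 0 ∧ Real.sqrt (∑ i, (k i : ℝ) ^ 2) < r},
        (2 : ℝ) ^ (Finset.univ.filter (fun i => k i ≠ 0)).card)
      ≤ latticeConstant d * r ^ d := by
  have hfin : {k : Fin d → ℕ | k ≠ 0 ∧ √(∑ i, (k i : ℝ) ^ 2) < r}.Finite :=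
    (finite_setOf_sqrt_sum_sq_lt r).subset fun _ hk => hk.2
  rw [finsum_mem_eq_finite_toFinset_sum _ hfin]
  simpa only [Fintype.card_fin] using
    sum_two_pow_card_support_le hr.le hfin.toFinset fun k hk => hfin.mem_toFinset.1 hk

/-- **Weighted lattice point count** (inequality (3.3)–(3.4) of
Benguria–Vallejos–Van Den Bosch): for `d ≥ 1` and `r > 0`,
`∑_{k ∈ ℕ₀^d, 0 < |k| < r} 2^{ν(k)} ≤ N_d r^d`, where `ν(k)` is the number of
nonzero components of the multi-index `k`. -/
theorem weighted_lattice_count (d : ℕ) (hd : 1 ≤ d) (r : ℝ) (hr : 0 < r) :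
    (∑ᶠ k ∈ {k : Fin d → ℕ | k ≠ 0 ∧ Real.sqrt (∑ i, (k i : ℝ) ^ 2) < r},
        (2 : ℝ) ^ (Finset.univ.filter (fun i => k i ≠ 0)).card)
      ≤ latticeConstant d * r ^ d :=
  weighted_lattice_count_general d r hr
end

section
/- For every r > 0, Σ_{k ∈ ℕ₀², 0 < |k| < r} 2^{ν(k)} ≤ (π + 4/√17) · r², where the sum runs over nonzero pairs k of nonnegative integers with Euclidean norm |k| < r and ν(k) is the number of nonzero components of k. -/
namespace WLC

open Finset Real

noncomputable def w (p : ℕ × ℕ) : ℝ :=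
  (if p.1 = 0 then 1 else 2) * (if p.2 = 0 then 1 else 2)

def G (M : ℕ) : Finset (ℕ × ℕ) :=
  (Finset.range (M+1) ×ˢ Finset.range (M+1)).filter
    (fun p => p ≠ (0,0) ∧ p.1 * p.1 + p.2 * p.2 ≤ M)

lemma natSqrt_le_real_sqrt (n : ℕ) : (Nat.sqrt n : ℝ) ≤ Real.sqrt n := by
  rw [Real.le_sqrt (by positivity) (by positivity)]
  exact_mod_cast Nat.cast_le.2 (Nat.sqrt_le' n)

lemma card1 (M : ℕ) : ((G M).filter (fun p => p.1 = 0)).card ≤ Nat.sqrt M := by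
  have hsub : ((G M).filter (fun p => p.1 = 0)) ⊆ ({0} : Finset ℕ) ×ˢ Finset.Icc 1 (Nat.sqrt M) := by
    intro p hp
    simp only [G, Finset.mem_filter, Finset.mem_product, Finset.mem_range] at hp
    obtain ⟨⟨-, ⟨hne, hsum⟩⟩, h0⟩ := hp
    have h2 : p.2 ≠ 0 := by
      intro h
      exact hne (Prod.ext h0 h)
    simp only [Finset.mem_product, Finset.mem_singleton, Finset.mem_Icc]
    refine ⟨h0, Nat.one_le_iff_ne_zero.2 h2, Nat.le_sqrt.2 ?_⟩
    calc p.2 * p.2 ≤ p.1 * p.1 + p.2 * p.2 := Nat.le_add_left _ _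
      _ ≤ M := hsum
  calc ((G M).filter (fun p => p.1 = 0)).card ≤ _ := Finset.card_le_card hsub
    _ ≤ Nat.sqrt M := by simp [Nat.card_Icc]

lemma card2 (M : ℕ) : ((G M).filter (fun p => p.2 = 0)).card ≤ Nat.sqrt M := by
  have hsub : ((G M).filter (fun p => p.2 = 0)) ⊆ Finset.Icc 1 (Nat.sqrt M) ×ˢ ({0} : Finset ℕ) := by
    intro p hp
    simp only [G, Finset.mem_filter, Finset.mem_product, Finset.mem_range] at hp
    obtain ⟨⟨-, ⟨hne, hsum⟩⟩, h0⟩ := hp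
    have h2 : p.1 ≠ 0 := by
      intro h
      exact hne (Prod.ext h h0)
    simp only [Finset.mem_product, Finset.mem_singleton, Finset.mem_Icc]
    refine ⟨⟨Nat.one_le_iff_ne_zero.2 h2, Nat.le_sqrt.2 ?_⟩, h0⟩
    calc p.1 * p.1 ≤ p.1 * p.1 + p.2 * p.2 := Nat.le_add_right _ _
      _ ≤ M := hsum
  calc ((G M).filter (fun p => p.2 = 0)).card ≤ _ := Finset.card_le_card hsub
    _ ≤ Nat.sqrt M := by simp [Nat.card_Icc]

lemma card3_nat (M : ℕ) : ((G M).filter (fun p => p.1 ≠ 0 ∧ p.2 ≠ 0)).card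
    ≤ ∑ a ∈ Finset.Icc 1 (Nat.sqrt M), Nat.sqrt (M - a * a) := by
  have hsub : ((G M).filter (fun p => p.1 ≠ 0 ∧ p.2 ≠ 0)) ⊆
      (Finset.Icc 1 (Nat.sqrt M)).biUnion
        (fun a => ({a} : Finset ℕ) ×ˢ Finset.Icc 1 (Nat.sqrt (M - a * a))) := by
    intro p hp
    simp only [G, Finset.mem_filter, Finset.mem_product, Finset.mem_range] at hp
    obtain ⟨⟨-, ⟨-, hsum⟩⟩, h1, h2⟩ := hp
    simp only [Finset.mem_biUnion, Finset.mem_Icc, Finset.mem_product, Finset.mem_singleton]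
    refine ⟨p.1, ⟨Nat.one_le_iff_ne_zero.2 h1, Nat.le_sqrt.2 ?_⟩, rfl,
      Nat.one_le_iff_ne_zero.2 h2, Nat.le_sqrt.2 ?_⟩
    · calc p.1 * p.1 ≤ p.1 * p.1 + p.2 * p.2 := Nat.le_add_right _ _
        _ ≤ M := hsum
    · omega
  calc ((G M).filter (fun p => p.1 ≠ 0 ∧ p.2 ≠ 0)).card ≤ _ := Finset.card_le_card hsub
    _ ≤ ∑ a ∈ Finset.Icc 1 (Nat.sqrt M), (({a} : Finset ℕ) ×ˢ Finset.Icc 1 (Nat.sqrt (M - a * a))).card :=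
        Finset.card_biUnion_le
    _ = ∑ a ∈ Finset.Icc 1 (Nat.sqrt M), Nat.sqrt (M - a * a) := by
        simp [Nat.card_Icc]

lemma cont (M : ℕ) : Continuous (fun x : ℝ => Real.sqrt ((M:ℝ) - x^2)) := by
  fun_prop

lemma quarter : ∫ x in (0:ℝ)..1, Real.sqrt (1 - x^2) = π/4 := by
  have hc : Continuous fun x : ℝ => Real.sqrt (1 - x^2) := by fun_prop
  have h1 : ∫ x in (-1:ℝ)..0, Real.sqrt (1 - x^2) = ∫ x in (0:ℝ)..1, Real.sqrt (1 - x^2) := by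
    have := intervalIntegral.integral_comp_neg (a := (0:ℝ)) (b := 1)
      (fun x => Real.sqrt (1 - x^2))
    simp only [neg_zero, neg_sq] at this
    rw [← this]
  have h3 := intervalIntegral.integral_add_adjacent_intervals
    (f := fun x : ℝ => Real.sqrt (1 - x^2)) (μ := MeasureTheory.volume) (a := -1) (b := 0) (c := 1)
    (hc.intervalIntegrable _ _) (hc.intervalIntegrable _ _)
  have h2 := integral_sqrt_one_sub_sq
  rw [h1] at h3
  linarith [h3, h2]

lemma sqrt_integral (M : ℕ) (hM : 1 ≤ M) :
    ∫ x in (0:ℝ)..(Real.sqrt M), Real.sqrt ((M:ℝ) - x^2) = π/4 * M := by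
  set c := Real.sqrt (M:ℝ) with hcdef
  have hM0 : (0:ℝ) < M := by exact_mod_cast hM
  have hc0 : 0 < c := Real.sqrt_pos.2 hM0
  have hcsq : c^2 = (M:ℝ) := Real.sq_sqrt hM0.le
  have key := intervalIntegral.integral_comp_mul_left (a := (0:ℝ)) (b := 1)
      (f := fun x => Real.sqrt ((M:ℝ) - x^2)) (c := c) hc0.ne'
  have lhs : ∀ x : ℝ, Real.sqrt ((M:ℝ) - (c*x)^2) = c * Real.sqrt (1 - x^2) := by
    intro x
    rw [mul_pow, ← hcsq, show c^2 - c^2*x^2 = c^2*(1 - x^2) by ring,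
      Real.sqrt_mul (sq_nonneg c), Real.sqrt_sq hc0.le]
  simp only [lhs, mul_zero, mul_one] at key
  rw [intervalIntegral.integral_const_mul, quarter, smul_eq_mul] at key
  have : ∫ x in (0:ℝ)..c, Real.sqrt ((M:ℝ) - x^2) = c * (c * (π/4)) := by
    field_simp at key
    linarith [key]
  rw [this]
  rw [show c * (c * (π/4)) = c^2 * (π/4) by ring, hcsq]
  ring

lemma sum_sqrt_le (M : ℕ) :
    ∑ a ∈ Finset.Icc 1 (Nat.sqrt M), Real.sqrt ((M:ℝ) - (a:ℝ)^2) ≤ π/4 * M := by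
  rcases Nat.eq_zero_or_pos M with h0 | hM
  · subst h0; simp
  set L := Nat.sqrt M with hL
  set f : ℝ → ℝ := fun x => Real.sqrt ((M:ℝ) - x^2) with hf
  have hcont : Continuous f := cont M
  have hstep : ∀ a ∈ Finset.Icc 1 L, f (a:ℝ) ≤ ∫ x in ((a:ℝ)-1)..(a:ℝ), f x := by
    intro a ha
    have h1 : (1:ℝ) ≤ (a:ℝ) := by exact_mod_cast (Finset.mem_Icc.1 ha).1
    have hconst : f (a:ℝ) = ∫ _x in ((a:ℝ)-1)..(a:ℝ), f (a:ℝ) := by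
      rw [intervalIntegral.integral_const]; simp
    rw [hconst]
    apply intervalIntegral.integral_mono_on (by linarith)
      (intervalIntegrable_const) (hcont.intervalIntegrable _ _)
    intro x hx
    apply Real.sqrt_le_sqrt
    have hx0 : 0 ≤ x := by linarith [hx.1]
    nlinarith [hx.2]
  calc ∑ a ∈ Finset.Icc 1 L, f (a:ℝ) ≤ ∑ a ∈ Finset.Icc 1 L, ∫ x in ((a:ℝ)-1)..(a:ℝ), f x :=
        Finset.sum_le_sum hstep
    _ = ∑ k ∈ Finset.range L, ∫ x in ((k:ℕ):ℝ)..(((k+1:ℕ)):ℝ), f x := by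
        rw [← Finset.Ico_add_one_right_eq_Icc, Finset.sum_Ico_eq_sum_range]
        apply Finset.sum_congr (by norm_num)
        intro k _
        congr 1 <;> push_cast <;> ring
    _ = ∫ x in ((0:ℕ):ℝ)..((L:ℕ):ℝ), f x :=
        intervalIntegral.sum_integral_adjacent_intervals
          (fun k _ => hcont.intervalIntegrable _ _)
    _ ≤ ∫ x in (0:ℝ)..(Real.sqrt M), f x := by
        rw [← intervalIntegral.integral_add_adjacent_intervals (a := (0:ℝ)) (b := ((L:ℕ):ℝ))
          (c := Real.sqrt M) (hcont.intervalIntegrable _ _) (hcont.intervalIntegrable _ _)]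
        have hnn : 0 ≤ ∫ x in ((L:ℕ):ℝ)..(Real.sqrt M), f x :=
          intervalIntegral.integral_nonneg (natSqrt_le_real_sqrt M)
            (fun u _ => Real.sqrt_nonneg _)
        push_cast
        push_cast at hnn
        linarith
    _ = π/4 * M := sqrt_integral M hM

lemma sum_w_le (M : ℕ) :
    ∑ p ∈ G M, w p ≤ 2 * ((G M).filter (fun p => p.1 = 0)).card
      + 2 * ((G M).filter (fun p => p.2 = 0)).card
      + 4 * ((G M).filter (fun p => p.1 ≠ 0 ∧ p.2 ≠ 0)).card := by
  have hpt : ∀ p ∈ G M, w p ≤ (if p.1 = 0 then (2:ℝ) else 0) + (if p.2 = 0 then (2:ℝ) else 0)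
      + (if p.1 ≠ 0 ∧ p.2 ≠ 0 then (4:ℝ) else 0) := by
    intro p _
    rcases eq_or_ne p.1 0 with h1 | h1 <;> rcases eq_or_ne p.2 0 with h2 | h2 <;>
      simp [w, h1, h2] <;> norm_num
  calc ∑ p ∈ G M, w p ≤ ∑ p ∈ G M, ((if p.1 = 0 then (2:ℝ) else 0)
        + (if p.2 = 0 then (2:ℝ) else 0) + (if p.1 ≠ 0 ∧ p.2 ≠ 0 then (4:ℝ) else 0)) :=
      Finset.sum_le_sum hpt
    _ = _ := by
      rw [Finset.sum_add_distrib, Finset.sum_add_distrib]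
      congr 1
      · congr 1
        · rw [← Finset.sum_filter, Finset.sum_const, nsmul_eq_mul, mul_comm]
        · rw [← Finset.sum_filter, Finset.sum_const, nsmul_eq_mul, mul_comm]
      · rw [← Finset.sum_filter, Finset.sum_const, nsmul_eq_mul, mul_comm]

lemma c97 : (0.97:ℝ) ≤ 4 / Real.sqrt 17 := by
  rw [le_div_iff₀ (Real.sqrt_pos.2 (by norm_num))]
  nlinarith [Real.sq_sqrt (show (0:ℝ) ≤ 17 by norm_num), Real.sqrt_nonneg 17]

lemma small_case (M s P : ℕ)
    (h1 : ((G M).filter (fun p => p.1 = 0)).card ≤ s)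
    (h2 : ((G M).filter (fun p => p.2 = 0)).card ≤ s)
    (h3 : ((G M).filter (fun p => p.1 ≠ 0 ∧ p.2 ≠ 0)).card ≤ P)
    (hnum : (4*s + 4*P : ℝ) ≤ (Real.pi + 4 / Real.sqrt 17) * M) :
    ∑ p ∈ G M, w p ≤ (Real.pi + 4 / Real.sqrt 17) * M := by
  have h := sum_w_le M
  have c1 : (((G M).filter (fun p => p.1 = 0)).card : ℝ) ≤ s := by exact_mod_cast h1
  have c2 : (((G M).filter (fun p => p.2 = 0)).card : ℝ) ≤ s := by exact_mod_cast h2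
  have c3 : (((G M).filter (fun p => p.1 ≠ 0 ∧ p.2 ≠ 0)).card : ℝ) ≤ P := by exact_mod_cast h3
  linarith

lemma card3_real (M : ℕ) :
    (((G M).filter (fun p => p.1 ≠ 0 ∧ p.2 ≠ 0)).card : ℝ) ≤ π/4 * M := by
  have h0 : (((G M).filter (fun p => p.1 ≠ 0 ∧ p.2 ≠ 0)).card : ℝ)
      ≤ ∑ a ∈ Finset.Icc 1 (Nat.sqrt M), (Nat.sqrt (M - a * a) : ℝ) := by
    rw [← Nat.cast_sum]
    exact_mod_cast card3_nat M
  refine h0.trans ((Finset.sum_le_sum ?_).trans (sum_sqrt_le M))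
  intro a ha
  have haM : a * a ≤ M := Nat.le_sqrt.1 (Finset.mem_Icc.1 ha).2
  have hcast : ((M - a * a : ℕ) : ℝ) = (M:ℝ) - (a:ℝ)^2 := by
    push_cast [Nat.cast_sub haM]
    ring
  calc (Nat.sqrt (M - a * a) : ℝ) ≤ Real.sqrt ((M - a*a : ℕ) : ℝ) := natSqrt_le_real_sqrt _
    _ = Real.sqrt ((M:ℝ) - (a:ℝ)^2) := by rw [hcast]

lemma key (M : ℕ) : ∑ p ∈ G M, w p ≤ (Real.pi + 4 / Real.sqrt 17) * M := by
  rcases le_or_gt 17 M with hM | hM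
  · have h := sum_w_le M
    have c1 : (((G M).filter (fun p => p.1 = 0)).card : ℝ) ≤ Real.sqrt M :=
      le_trans (by exact_mod_cast Nat.cast_le.2 (card1 M)) (natSqrt_le_real_sqrt M)
    have c2 : (((G M).filter (fun p => p.2 = 0)).card : ℝ) ≤ Real.sqrt M :=
      le_trans (by exact_mod_cast Nat.cast_le.2 (card2 M)) (natSqrt_le_real_sqrt M)
    have c3 := card3_real M
    have hs0 : (0:ℝ) < Real.sqrt 17 := Real.sqrt_pos.2 (by norm_num)
    have hst : Real.sqrt 17 ≤ Real.sqrt M := Real.sqrt_le_sqrt (by exact_mod_cast hM)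
    have htt : Real.sqrt M * Real.sqrt M = (M:ℝ) := Real.mul_self_sqrt (by positivity)
    have h4 : 4 * Real.sqrt M ≤ 4 / Real.sqrt 17 * M := by
      rw [div_mul_eq_mul_div, le_div_iff₀ hs0]
      nlinarith [Real.sqrt_nonneg (M:ℝ)]
    linarith
  · interval_cases M
    · exact small_case 0 0 0 (by decide) (by decide) (by decide) (by norm_num)
    · exact small_case 1 1 0 (by decide) (by decide) (by decide)
        (by nlinarith [Real.pi_gt_d6, c97])
    · exact small_case 2 1 1 (by decide) (by decide) (by decide)
        (by nlinarith [Real.pi_gt_d6, c97])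
    · exact small_case 3 1 1 (by decide) (by decide) (by decide)
        (by nlinarith [Real.pi_gt_d6, c97])
    · exact small_case 4 2 1 (by decide) (by decide) (by decide)
        (by nlinarith [Real.pi_gt_d6, c97])
    · exact small_case 5 2 3 (by decide) (by decide) (by decide)
        (by nlinarith [Real.pi_gt_d6, c97])
    · exact small_case 6 2 3 (by decide) (by decide) (by decide)
        (by nlinarith [Real.pi_gt_d6, c97])
    · exact small_case 7 2 3 (by decide) (by decide) (by decide)
        (by nlinarith [Real.pi_gt_d6, c97])
    · exact small_case 8 2 4 (by decide) (by decide) (by decide)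
        (by nlinarith [Real.pi_gt_d6, c97])
    · exact small_case 9 3 4 (by decide) (by decide) (by decide)
        (by nlinarith [Real.pi_gt_d6, c97])
    · exact small_case 10 3 6 (by decide) (by decide) (by decide)
        (by nlinarith [Real.pi_gt_d6, c97])
    · exact small_case 11 3 6 (by decide) (by decide) (by decide)
        (by nlinarith [Real.pi_gt_d6, c97])
    · exact small_case 12 3 6 (by decide) (by decide) (by decide)
        (by nlinarith [Real.pi_gt_d6, c97])
    · exact small_case 13 3 8 (by decide) (by decide) (by decide)
        (by nlinarith [Real.pi_gt_d6, c97])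
    · exact small_case 14 3 8 (by decide) (by decide) (by decide)
        (by nlinarith [Real.pi_gt_d6, c97])
    · exact small_case 15 3 8 (by decide) (by decide) (by decide)
        (by nlinarith [Real.pi_gt_d6, c97])
    · exact small_case 16 4 8 (by decide) (by decide) (by decide)
        (by nlinarith [Real.pi_gt_d6, c97])

lemma weight_eq (a b : ℕ) :
    (2:ℝ) ^ (Finset.univ.filter (fun i => (![a, b] : Fin 2 → ℕ) i ≠ 0)).card = w (a, b) := by
  rw [Finset.card_filter, Fin.sum_univ_two]
  simp only [Matrix.cons_val_zero, Matrix.cons_val_one, Matrix.head_cons]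
  rcases eq_or_ne a 0 with ha | ha <;> rcases eq_or_ne b 0 with hb | hb <;>
    simp [w, ha, hb] <;> norm_num

lemma self_le_mul_self (m : ℕ) : m ≤ m * m := by
  rcases Nat.eq_zero_or_pos m with h | h
  · simp [h]
  · exact Nat.le_mul_of_pos_left m h

end WLC

/-- **Improved lattice point count in dimension 2** (Remark 3.2 of
Benguria–Vallejos–Van Den Bosch): for every `r > 0`,
`∑_{k ∈ ℕ₀², 0 < |k| < r} 2^{ν(k)} ≤ (π + 4/√17) r²`. -/
theorem weighted_lattice_count_dim_two (r : ℝ) (hr : 0 < r) :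
    (∑ᶠ k ∈ {k : Fin 2 → ℕ | k ≠ 0 ∧ Real.sqrt (∑ i, (k i : ℝ) ^ 2) < r},
        (2 : ℝ) ^ (Finset.univ.filter (fun i => k i ≠ 0)).card)
      ≤ (Real.pi + 4 / Real.sqrt 17) * r ^ 2 := by
  classical
  open WLC in
  set M : ℕ := ⌈r^2⌉₊ - 1 with hMdef
  set f : (Fin 2 → ℕ) → ℝ := fun k => (2:ℝ) ^ (Finset.univ.filter (fun i => k i ≠ 0)).card
    with hfdef
  set s : Set (Fin 2 → ℕ) := {k | k ≠ 0 ∧ Real.sqrt (∑ i, (k i : ℝ)^2) < r} with hsdef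
  set Fim : Finset (Fin 2 → ℕ) := (WLC.G M).image (fun p => ![p.1, p.2]) with hFimdef
  have hr2 : (0:ℝ) < r^2 := by positivity
  have hceil : 1 ≤ ⌈r^2⌉₊ := Nat.one_le_ceil_iff.2 hr2
  have hMr : (M:ℝ) ≤ r^2 := by
    have h := Nat.ceil_lt_add_one hr2.le
    have heq : (M:ℝ) = (⌈r^2⌉₊ : ℝ) - 1 := by
      rw [hMdef]
      push_cast [Nat.cast_sub hceil]
      ring
    linarith
  have hsub : s ⊆ ↑Fim := by
    intro k hk
    obtain ⟨hk0, hklt⟩ := hk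
    have hsum : ∑ i, ((k i : ℝ))^2 = ((k 0 * k 0 + k 1 * k 1 : ℕ) : ℝ) := by
      rw [Fin.sum_univ_two]
      push_cast
      ring
    have hlt : ((k 0 * k 0 + k 1 * k 1 : ℕ) : ℝ) < r^2 := by
      rw [← hsum]
      exact (Real.sqrt_lt' hr).1 hklt
    have hnM : k 0 * k 0 + k 1 * k 1 ≤ M := by
      have := Nat.lt_ceil.2 hlt
      omega
    have hmem : (k 0, k 1) ∈ WLC.G M := by
      simp only [WLC.G, Finset.mem_filter, Finset.mem_product, Finset.mem_range]
      refine ⟨⟨?_, ?_⟩, ?_, hnM⟩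
      · have := WLC.self_le_mul_self (k 0); omega
      · have := WLC.self_le_mul_self (k 1); omega
      · intro h
        apply hk0
        have h0 : k 0 = 0 := congrArg Prod.fst h
        have h1 : k 1 = 0 := congrArg Prod.snd h
        funext i
        fin_cases i <;> simp [h0, h1]
    have hk_eq : (![k 0, k 1] : Fin 2 → ℕ) = k := by
      funext i
      fin_cases i <;> rfl
    simp only [hFimdef, Finset.coe_image, Set.mem_image, Finset.mem_coe]
    exact ⟨(k 0, k 1), hmem, hk_eq⟩
  have hsfin : s.Finite := Set.Finite.subset Fim.finite_toSet hsub
  rw [finsum_mem_eq_finite_toFinset_sum f hsfin]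
  have hsubF : hsfin.toFinset ⊆ Fim := by
    intro x hx
    rw [Set.Finite.mem_toFinset] at hx
    exact hsub hx
  have h1 : ∑ k ∈ hsfin.toFinset, f k ≤ ∑ k ∈ Fim, f k :=
    Finset.sum_le_sum_of_subset_of_nonneg hsubF (fun x _ _ => by positivity)
  have h2 : ∑ k ∈ Fim, f k = ∑ p ∈ WLC.G M, WLC.w p := by
    rw [hFimdef, Finset.sum_image]
    · exact Finset.sum_congr rfl (fun p _ => WLC.weight_eq p.1 p.2)
    · intro x _ y _ h
      have h0 := congrFun h 0
      have h1 := congrFun h 1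
      simp only [Matrix.cons_val_zero, Matrix.cons_val_one, Matrix.head_cons] at h0 h1
      exact Prod.ext h0 h1
  have h3 := WLC.key M
  have hC : (0:ℝ) ≤ Real.pi + 4 / Real.sqrt 17 := by positivity
  calc ∑ k ∈ hsfin.toFinset, f k ≤ ∑ p ∈ WLC.G M, WLC.w p := by rw [← h2]; exact h1
    _ ≤ (Real.pi + 4 / Real.sqrt 17) * M := h3
    _ ≤ (Real.pi + 4 / Real.sqrt 17) * r^2 := mul_le_mul_of_nonneg_left hMr hC
end

section
/- For every r > 0, Σ_{k ∈ ℕ₀³, 0 < |k| < r} 2^{ν(k)} ≤ (4π/3 + 3π/√19 + 6/19) · r³, where the sum runs over nonzero triples k of nonnegative integers with Euclidean norm |k| < r and ν(k) is the number of nonzero components of k. -/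
/-!
For `r ≥ 6` this is a volume argument: the folded unit cubes
`Q_k = {x | |x_i| ∈ [k_i - 1/2, k_i + 1/2) for all i}` are pairwise disjoint, `Q_k` has volume
`2^ν(k)` (one reflected copy of the cube per sign pattern of the nonzero coordinates), and for
`|k| < r` it lies in the ball of radius `r + √3/2`. Hence the sum is at most
`(4π/3)(r + √3/2)³ ≤ 6.4 r³`. For `r < 6` the sum only depends on `⌊r²⌋ ≤ 36`, and the same
bound `6.4 r³` is checked by computation. Finally `6.4 ≤ 4π/3 + 3π/√19 + 6/19`.
-/

open Finset MeasureTheory Metric Real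

def latticeWeight {d : ℕ} (k : Fin d → ℕ) : ℝ :=
  2 ^ (Finset.univ.filter fun i => k i ≠ 0).card

def latticeBall (d : ℕ) (r : ℝ) : Set (Fin d → ℕ) :=
  {k | k ≠ 0 ∧ √(∑ i, (k i : ℝ) ^ 2) < r}

lemma coord_lt_of_mem_latticeBall {d : ℕ} {r : ℝ} {k : Fin d → ℕ} (hk : k ∈ latticeBall d r)
    (i : Fin d) : (k i : ℝ) < r :=
  calc (k i : ℝ) ≤ √(∑ j, (k j : ℝ) ^ 2) :=
        Real.le_sqrt_of_sq_le (single_le_sum (fun j _ => sq_nonneg (k j : ℝ)) (mem_univ i))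
    _ < r := hk.2

lemma finite_latticeBall (d : ℕ) (r : ℝ) : (latticeBall d r).Finite :=
  (Set.finite_Iic fun _ => ⌈r⌉₊).subset fun _ hk i =>
    Nat.cast_le.1 ((coord_lt_of_mem_latticeBall hk i).le.trans (Nat.le_ceil r))

section SmallRadius

def weightedCount (d N m : ℕ) : ℕ :=
  ∑ k ∈ (Fintype.piFinset fun _ : Fin d => range N).filter
      (fun k => k ≠ 0 ∧ ∑ i, k i ^ 2 ≤ m),
    2 ^ (univ.filter fun i => k i ≠ 0).card

lemma finsum_latticeBall_le_weightedCount {d N : ℕ} {r : ℝ} (hrN : r ≤ N) :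
    ∑ᶠ k ∈ latticeBall d r, latticeWeight k ≤ weightedCount d N ⌊r ^ 2⌋₊ := by
  rw [finsum_mem_eq_finite_toFinset_sum _ (finite_latticeBall d r), weightedCount]
  push_cast [latticeWeight]
  refine sum_le_sum_of_subset_of_nonneg (fun k hk => ?_) fun _ _ _ => by positivity
  rw [Set.Finite.mem_toFinset] at hk
  have hr : 0 < r := (Real.sqrt_nonneg _).trans_lt hk.2
  have hsq : ∑ i, (k i : ℝ) ^ 2 < r ^ 2 := (Real.sqrt_lt' hr).1 hk.2
  simp only [mem_filter, Fintype.mem_piFinset, mem_range]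
  refine ⟨fun i => Nat.cast_lt.1 ((coord_lt_of_mem_latticeBall hk i).trans_le hrN), hk.1,
    Nat.le_floor ?_⟩
  push_cast
  exact hsq.le

set_option maxRecDepth 100000 in
/-- That is, `weightedCount 3 6 m ≤ 6.4 m^{3/2}`; the worst case is `m = 2`, with ratio `≈ 6.36`. -/
lemma weightedCount_three_six_sq_le :
    ∀ m ∈ range 37, 25 * weightedCount 3 6 m ^ 2 ≤ 1024 * m ^ 3 := by
  decide

lemma finsum_latticeBall_three_le_of_le_six {r : ℝ} (hr : 0 < r) (hr6 : r ≤ 6) :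
    ∑ᶠ k ∈ latticeBall 3 r, latticeWeight k ≤ 32 / 5 * r ^ 3 := by
  set m := ⌊r ^ 2⌋₊
  have hm : (m : ℝ) ≤ r ^ 2 := Nat.floor_le (by positivity)
  have hm36 : m < 37 := Nat.lt_succ_of_le (Nat.floor_le_of_le (by push_cast; nlinarith))
  refine (finsum_latticeBall_le_weightedCount (N := 6) (by exact_mod_cast hr6)).trans ?_
  set g := weightedCount 3 6 m
  have hg : 25 * (g : ℝ) ^ 2 ≤ 1024 * (m : ℝ) ^ 3 := by
    exact_mod_cast weightedCount_three_six_sq_le m (mem_range.2 hm36)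
  have hm3 : (m : ℝ) ^ 3 ≤ (r ^ 2) ^ 3 := pow_le_pow_left₀ (Nat.cast_nonneg m) hm 3
  have hsq : (5 * (g : ℝ)) ^ 2 ≤ (32 * r ^ 3) ^ 2 := by nlinarith
  have h5g : 5 * (g : ℝ) ≤ 32 * r ^ 3 :=
    (pow_le_pow_iff_left₀ (by positivity) (by positivity) two_ne_zero).1 hsq
  linarith

end SmallRadius

section LargeRadius

def foldedInterval (n : ℕ) : Set ℝ :=
  {t | |t| ∈ Set.Ico ((n : ℝ) - 1 / 2) (n + 1 / 2)}

lemma measurableSet_foldedInterval (n : ℕ) : MeasurableSet (foldedInterval n) :=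
  continuous_abs.measurable measurableSet_Ico

lemma volume_foldedInterval (n : ℕ) : volume (foldedInterval n) = if n = 0 then 1 else 2 := by
  rcases eq_or_ne n 0 with rfl | hn
  · have : foldedInterval 0 = Set.Ioo (-(1 / 2)) (1 / 2) := by
      ext t
      simp only [foldedInterval, Set.mem_ofPred_eq, Set.mem_Ico, Set.mem_Ioo, Nat.cast_zero]
      rcases abs_cases t with ⟨h, _⟩ | ⟨h, _⟩ <;> rw [h] <;> grind
    rw [this, Real.volume_Ioo]
    norm_num
  · have hn1 : (1 : ℝ) ≤ n := Nat.one_le_cast.2 (Nat.one_le_iff_ne_zero.2 hn)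
    have : foldedInterval n =
        Set.Ico ((n : ℝ) - 1 / 2) (n + 1 / 2) ∪ Set.Ioc (-(n + 1 / 2)) (-(n - 1 / 2)) := by
      ext t
      simp only [foldedInterval, Set.mem_ofPred_eq, Set.mem_Ico, Set.mem_union, Set.mem_Ioc]
      rcases abs_cases t with ⟨h, _⟩ | ⟨h, _⟩ <;> rw [h] <;> grind
    rw [this, measure_union _ measurableSet_Ioc, Real.volume_Ico, Real.volume_Ioc, if_neg hn]
    · ring_nf
      norm_num
    · exact Set.disjoint_left.2 fun t h₁ h₂ => by linarith [h₁.1, h₂.2]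

lemma eq_of_mem_foldedInterval {m n : ℕ} {t : ℝ} (hm : t ∈ foldedInterval m)
    (hn : t ∈ foldedInterval n) : m = n := by
  have h₁ : (m : ℝ) < n + 1 := by linarith [hm.1, hn.2]
  have h₂ : (n : ℝ) < m + 1 := by linarith [hn.1, hm.2]
  have : m < n + 1 := by exact_mod_cast h₁
  have : n < m + 1 := by exact_mod_cast h₂
  omega

def foldedCube {d : ℕ} (k : Fin d → ℕ) : Set (EuclideanSpace ℝ (Fin d)) :=
  WithLp.ofLp ⁻¹' Set.univ.pi fun i => foldedInterval (k i)

variable {d : ℕ}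

lemma measurableSet_foldedCube (k : Fin d → ℕ) : MeasurableSet (foldedCube k) :=
  (PiLp.volume_preserving_ofLp (Fin d)).measurable
    (MeasurableSet.univ_pi fun i => measurableSet_foldedInterval (k i))

lemma volume_foldedCube (k : Fin d → ℕ) :
    volume (foldedCube k) = 2 ^ (univ.filter fun i => k i ≠ 0).card := by
  rw [foldedCube, (PiLp.volume_preserving_ofLp (Fin d)).measure_preimage
      (MeasurableSet.univ_pi fun i => measurableSet_foldedInterval (k i)).nullMeasurableSet,
    volume_pi_pi]
  simp [volume_foldedInterval, prod_ite]

lemma pairwise_disjoint_foldedCube : Pairwise (Function.onFun Disjoint (foldedCube (d := d))) :=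
  fun _ _ hne => Set.disjoint_left.2 fun _ hx hx' =>
    hne (funext fun i => eq_of_mem_foldedInterval (hx i (Set.mem_univ i)) (hx' i (Set.mem_univ i)))

lemma EuclideanSpace.norm_le_sqrt_card_mul {ι : Type*} [Fintype ι] {v : EuclideanSpace ℝ ι}
    {c : ℝ} (hc : 0 ≤ c) (hv : ∀ i, |v i| ≤ c) : ‖v‖ ≤ √(Fintype.card ι) * c := by
  rw [EuclideanSpace.norm_eq, ← Real.sqrt_sq hc, ← Real.sqrt_mul (Nat.cast_nonneg _)]
  gcongr
  calc ∑ i, ‖v i‖ ^ 2 ≤ ∑ _i : ι, c ^ 2 :=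
        sum_le_sum fun i _ => pow_le_pow_left₀ (norm_nonneg _) (hv i) 2
    _ = Fintype.card ι * c ^ 2 := by simp

lemma foldedCube_subset_ball {k : Fin d → ℕ} {r : ℝ} (hk : √(∑ i, (k i : ℝ) ^ 2) < r) :
    foldedCube k ⊆ ball 0 (r + √d / 2) := by
  intro x hx
  set y : EuclideanSpace ℝ (Fin d) := WithLp.toLp 2 fun i => |x i|
  set κ : EuclideanSpace ℝ (Fin d) := WithLp.toLp 2 fun i => (k i : ℝ)
  have hxy : ‖x‖ = ‖y‖ := by simp [y, EuclideanSpace.norm_eq]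
  have hκ : ‖κ‖ = √(∑ i, (k i : ℝ) ^ 2) := by simp [κ, EuclideanSpace.norm_eq]
  have hyκ : ‖y - κ‖ ≤ √d * (1 / 2) := by
    refine (EuclideanSpace.norm_le_sqrt_card_mul (c := 1 / 2) (by norm_num) fun i => ?_).trans_eq
      (by simp)
    obtain ⟨h₁, h₂⟩ := hx i (Set.mem_univ i)
    simp only [y, κ, PiLp.sub_apply]
    exact abs_le.2 ⟨by linarith, by linarith⟩
  rw [mem_ball_zero_iff, hxy]
  linarith [norm_le_norm_add_norm_sub' y κ]

lemma finsum_latticeBall_le_volume_ball (d : ℕ) (r : ℝ) :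
    ∑ᶠ k ∈ latticeBall d r, latticeWeight k
      ≤ (volume (ball (0 : EuclideanSpace ℝ (Fin d)) (r + √d / 2))).toReal := by
  set s := (finite_latticeBall d r).toFinset
  have hcubes : ∑ k ∈ s, volume (foldedCube k)
      ≤ volume (ball (0 : EuclideanSpace ℝ (Fin d)) (r + √d / 2)) := by
    rw [← measure_biUnion_finset (pairwise_disjoint_foldedCube.set_pairwise _)
      fun k _ => measurableSet_foldedCube k]
    exact measure_mono (Set.iUnion₂_subset fun k hk =>
      foldedCube_subset_ball ((Set.Finite.mem_toFinset _).1 hk).2)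
  rw [finsum_mem_eq_finite_toFinset_sum _ (finite_latticeBall d r)]
  calc ∑ k ∈ s, latticeWeight k = (∑ k ∈ s, volume (foldedCube k)).toReal := by
        simp [ENNReal.toReal_sum, volume_foldedCube, latticeWeight]
    _ ≤ _ := ENNReal.toReal_mono measure_ball_lt_top.ne hcubes

lemma finsum_latticeBall_three_le_of_six_le {r : ℝ} (hr : 6 ≤ r) :
    ∑ᶠ k ∈ latticeBall 3 r, latticeWeight k ≤ 32 / 5 * r ^ 3 := by
  refine (finsum_latticeBall_le_volume_ball 3 r).trans ?_
  have h3 : √3 ≤ 7 / 4 := Real.sqrt_le_iff.2 ⟨by norm_num, by norm_num⟩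
  have hR : r + √3 / 2 ≤ 55 / 48 * r := by linarith
  have hR₀ : 0 ≤ r + √3 / 2 := by positivity
  rw [EuclideanSpace.volume_ball_fin_three, ENNReal.toReal_mul, ENNReal.toReal_pow, Nat.cast_ofNat,
    ENNReal.toReal_ofReal hR₀, ENNReal.toReal_ofReal (by positivity)]
  have hr3 : 0 ≤ r ^ 3 := by positivity
  calc (r + √3 / 2) ^ 3 * (π * 4 / 3) ≤ (55 / 48 * r) ^ 3 * (3.15 * 4 / 3) := by
        gcongr
        exact pi_lt_d2.le
    _ ≤ 32 / 5 * r ^ 3 := by linarith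

end LargeRadius

lemma finsum_latticeBall_three_le {r : ℝ} (hr : 0 < r) :
    ∑ᶠ k ∈ latticeBall 3 r, latticeWeight k ≤ 32 / 5 * r ^ 3 := by
  rcases le_total r 6 with h | h
  · exact finsum_latticeBall_three_le_of_le_six hr h
  · exact finsum_latticeBall_three_le_of_six_le h

/-- **Improved lattice point count in dimension 3** (Remark 3.2 of
Benguria–Vallejos–Van Den Bosch): for every `r > 0`,
`∑_{k ∈ ℕ₀³, 0 < |k| < r} 2^{ν(k)} ≤ (4π/3 + 3π/√19 + 6/19) r³`. -/
theorem weighted_lattice_count_dim_three (r : ℝ) (hr : 0 < r) :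
    (∑ᶠ k ∈ {k : Fin 3 → ℕ | k ≠ 0 ∧ Real.sqrt (∑ i, (k i : ℝ) ^ 2) < r},
        (2 : ℝ) ^ (Finset.univ.filter (fun i => k i ≠ 0)).card)
      ≤ (4 * Real.pi / 3 + 3 * Real.pi / Real.sqrt 19 + 6 / 19) * r ^ 3 := by
  have h19 : √19 ≤ 109 / 25 := Real.sqrt_le_iff.2 ⟨by norm_num, by norm_num⟩
  have hπ : 3 * 3.14 / (109 / 25) ≤ 3 * π / √19 :=
    div_le_div₀ (by positivity) (by linarith [pi_gt_d2]) (by positivity) h19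
  have hC : (32 / 5 : ℝ) ≤ 4 * π / 3 + 3 * π / √19 + 6 / 19 := by linarith [pi_gt_d2]
  calc _ ≤ 32 / 5 * r ^ 3 := finsum_latticeBall_three_le hr
    _ ≤ _ := mul_le_mul_of_nonneg_right hC (by positivity)
end
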